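/- For μ > -1/2, a nonnegative integer n, and Re(s) > 0, the Mellin transform M^μ_{2n+1}(s) = ∫_0^∞ x^{s-1} H^μ_{2n+1}(x) x^μ e^{-x²/2} dx equals (-1)^n 2^{2n} 2^{(μ+s+1)/2} (μ+3/2)_n Γ((μ+s+1)/2) · ₂F₁(-n, (μ+s+1)/2; μ+3/2; 2). -/

import Mathlib

open Finset

/-- Rising factorial (Pochhammer symbol) on ℝ. -/
noncomputable def asc (a : ℝ) (k : ℕ) : ℝ := ∏ i ∈ Finset.range k, (a + i)

/-- Generalized Laguerre polynomial `L_n^α(x)`. -/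
noncomputable def lag (n : ℕ) (α : ℝ) (x : ℝ) : ℝ :=
  ∑ j ∈ Finset.range (n + 1),
    ((-1 : ℝ) ^ j / (j.factorial * (n - j).factorial)) * asc (α + j + 1) (n - j) * x ^ j

/-- Generalized Hermite polynomial of even degree: `H^μ_{2n}`. -/
noncomputable def Heven (μ : ℝ) (n : ℕ) (x : ℝ) : ℝ :=
  (-1 : ℝ) ^ n * 2 ^ (2 * n) * n.factorial * lag n (μ - 1/2) (x ^ 2)

/-- Generalized Hermite polynomial of odd degree: `H^μ_{2n+1}`. -/
noncomputable def Hodd (μ : ℝ) (n : ℕ) (x : ℝ) : ℝ :=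
  (-1 : ℝ) ^ n * 2 ^ (2 * n + 1) * n.factorial * x * lag n (μ + 1/2) (x ^ 2)

/-- Generalized Hermite polynomial `H^μ_n`. -/
noncomputable def GH (μ : ℝ) (n : ℕ) (x : ℝ) : ℝ :=
  if n % 2 = 0 then Heven μ (n / 2) x else Hodd μ (n / 2) x

/-- Rising factorial (Pochhammer symbol) on ℂ. -/
noncomputable def ascC (a : ℂ) (k : ℕ) : ℂ := ∏ i ∈ Finset.range k, (a + i)

/-- Terminating Gauss hypergeometric sum `₂F₁(-n, b; c; 2)`. -/
noncomputable def F2 (n : ℕ) (b c : ℂ) : ℂ :=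
  ∑ j ∈ Finset.range (n + 1),
    ascC (-(n : ℂ)) j * ascC b j / ascC c j * 2 ^ j / (j.factorial : ℂ)

/-- Mellin transform of the generalized Hermite function. -/
noncomputable def M (μ : ℝ) (n : ℕ) (s : ℂ) : ℂ :=
  ∫ x in Set.Ioi (0 : ℝ),
    (x : ℂ) ^ (s - 1) * (GH μ n x : ℂ) * ((x ^ μ : ℝ) : ℂ) * (Real.exp (-x ^ 2 / 2) : ℂ)

/-!
Expanding `H^μ_{2n+1}(x) = ∑ⱼ cⱼ x^{2j+1}` turns the Mellin transform into a finite sum of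
Gaussian moments `∫₀^∞ x^{s+μ+2j} e^{-x²/2} dx = 2^{b+j-1} Γ(b+j)` with `b = (μ+s+1)/2`.
Then `Γ(b+j) = (b)ⱼ Γ(b)`, `(μ+3/2)ₙ = (μ+3/2)ⱼ (μ+3/2+j)ₙ₋ⱼ` and `(-n)ⱼ = (-1)ʲ n!/(n-j)!`
identify the `j`-th term with that of `₂F₁(-n, b; μ+3/2; 2)`.
-/

open MeasureTheory Set

section Pochhammer

lemma ascC_eq_eval_ascPochhammer (a : ℂ) (k : ℕ) : ascC a k = (ascPochhammer ℂ k).eval a := by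
  induction k with
  | zero => simp [ascC]
  | succ k ih => rw [ascC, prod_range_succ, ← ascC, ih, ascPochhammer_succ_eval]

lemma ascC_add (a : ℂ) (j k : ℕ) : ascC a (j + k) = ascC a j * ascC (a + j) k := by
  simp only [ascC_eq_eval_ascPochhammer, ← ascPochhammer_mul, Polynomial.eval_mul,
    Polynomial.eval_comp, Polynomial.eval_add, Polynomial.eval_X, Polynomial.eval_natCast]

lemma Complex.Gamma_add_nat_eq_ascC_mul_Gamma {b : ℂ} (hb : ∀ k : ℕ, b ≠ -k) (j : ℕ) :
    Complex.Gamma (b + j) = ascC b j * Complex.Gamma b := by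
  rw [ascC_eq_eval_ascPochhammer, ← Complex.Gamma_add_nat_div_Gamma_eq b hb,
    div_mul_cancel₀ _ (Complex.Gamma_ne_zero hb)]

lemma ascC_ne_zero {a : ℂ} (ha : ∀ k : ℕ, a ≠ -k) (j : ℕ) : ascC a j ≠ 0 := by
  rw [ascC_eq_eval_ascPochhammer, Ne, ascPochhammer_eval_eq_zero_iff]
  rintro ⟨k, -, hk⟩
  exact ha k (by rw [hk, neg_neg])

lemma ascC_neg_natCast_mul_factorial {n j : ℕ} (h : j ≤ n) :
    ascC (-(n : ℂ)) j * ((n - j).factorial : ℂ) = (-1) ^ j * (n.factorial : ℂ) := by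
  rw [ascC_eq_eval_ascPochhammer, ascPochhammer_eval_neg_eq_descPochhammer,
    descPochhammer_eval_eq_descFactorial, mul_assoc, ← Nat.cast_mul,
    mul_comm (Nat.descFactorial _ _), Nat.factorial_mul_descFactorial h]

lemma ofReal_asc (a : ℝ) (k : ℕ) : ((asc a k : ℝ) : ℂ) = ascC a k := by
  simp [asc, ascC]

lemma Complex.ne_neg_natCast_of_re_pos {b : ℂ} (hb : 0 < b.re) (k : ℕ) : b ≠ -k := by
  rintro rfl
  simp only [Complex.neg_re, Complex.natCast_re, Left.neg_pos_iff] at hb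
  exact (Nat.cast_nonneg k).not_gt hb

end Pochhammer

section GaussianMellin

lemma integrableOn_cpow_mul_exp_neg_mul_sq {c : ℂ} (hc : -1 < c.re) {r : ℝ} (hr : 0 < r) :
    IntegrableOn (fun x : ℝ => (x : ℂ) ^ c * (Real.exp (-(r * x ^ 2)) : ℂ)) (Ioi 0) := by
  refine (integrableOn_rpow_mul_exp_neg_mul_sq hr hc).mono' ?_ ?_
  · refine ContinuousOn.aestronglyMeasurable (ContinuousOn.mul ?_ (by fun_prop)) measurableSet_Ioi
    exact Complex.continuous_ofReal.continuousOn.cpow_const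
      fun x hx => Complex.ofReal_mem_slitPlane.2 hx
  · filter_upwards [ae_restrict_mem measurableSet_Ioi] with x hx
    rw [norm_mul, Complex.norm_cpow_eq_rpow_re_of_pos hx, Complex.norm_real, Real.norm_eq_abs,
      Real.abs_exp, neg_mul]

/-- Substituting `t = x ^ 2` turns the Gaussian moment into Euler's integral for `Γ`. -/
lemma integral_cpow_mul_exp_neg_mul_sq {c : ℂ} (hc : -1 < c.re) {r : ℝ} (hr : 0 < r) :
    ∫ x in Ioi (0 : ℝ), (x : ℂ) ^ c * (Real.exp (-(r * x ^ 2)) : ℂ) =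
      1 / 2 * ((1 / r : ℂ) ^ ((c + 1) / 2) * Complex.Gamma ((c + 1) / 2)) := by
  set a : ℂ := (c + 1) / 2
  have ha : 0 < a.re := by
    simp only [a, Complex.div_ofNat_re, Complex.add_re, Complex.one_re]
    linarith
  have h_subst := integral_comp_rpow_Ioi_of_pos (p := 2) two_pos
    (g := fun t : ℝ => (t : ℂ) ^ (a - 1) * Complex.exp (-(r * (t : ℂ))))
  rw [← Complex.integral_cpow_mul_exp_neg_mul_Ioi ha hr, ← h_subst, ← integral_const_mul]
  refine setIntegral_congr_fun measurableSet_Ioi fun x (hx : 0 < x) => ?_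
  have h_pow : ((x ^ (2 : ℝ) : ℝ) : ℂ) ^ (a - 1) * x = (x : ℂ) ^ c := by
    have hx0 : (x : ℂ) ≠ 0 := by exact_mod_cast hx.ne'
    rw [← Complex.cpow_mul_ofReal_nonneg hx.le]
    nth_rw 2 [← Complex.cpow_one (x : ℂ)]
    rw [← Complex.cpow_add _ _ hx0]
    congr 1
    push_cast
    ring
  rw [← h_pow, show (2 : ℝ) - 1 = 1 by norm_num, Real.rpow_one, Real.rpow_two,
    Complex.real_smul]
  push_cast
  ring

end GaussianMellin

/-- The coefficient of `x ^ (2 * j + 1)` in `H^μ_{2n+1}(x)`. -/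
noncomputable def hoddCoeff (μ : ℝ) (n j : ℕ) : ℝ :=
  (-1) ^ n * 2 ^ (2 * n + 1) * n.factorial * ((-1) ^ j / (j.factorial * (n - j).factorial)) *
    asc (μ + 1 / 2 + j + 1) (n - j)

lemma GH_two_mul_add_one (μ : ℝ) (n : ℕ) : GH μ (2 * n + 1) = Hodd μ n := by
  ext x
  rw [GH, if_neg (by omega), show (2 * n + 1) / 2 = n by omega]

lemma Hodd_eq_sum (μ : ℝ) (n : ℕ) (x : ℝ) :
    Hodd μ n x = ∑ j ∈ range (n + 1), hoddCoeff μ n j * x ^ (2 * j + 1) := by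
  rw [Hodd, lag, mul_sum]
  refine sum_congr rfl fun j _ => ?_
  rw [hoddCoeff]
  ring

lemma M_two_mul_add_one_eq_sum {μ : ℝ} {s : ℂ} (h : -1 < s.re + μ) (n : ℕ) :
    M μ (2 * n + 1) s = ∑ j ∈ range (n + 1), (hoddCoeff μ n j : ℂ) *
      (2 ^ (((μ : ℂ) + s + 1) / 2 + j) / 2 * Complex.Gamma (((μ : ℂ) + s + 1) / 2 + j)) := by
  have h_re (j : ℕ) : -1 < (s + μ + 2 * j : ℂ).re := by
    simp only [Complex.add_re, Complex.ofReal_re, Complex.mul_re, Complex.re_ofNat,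
      Complex.natCast_re, Complex.im_ofNat, Complex.natCast_im]
    linarith [(Nat.cast_nonneg j : (0 : ℝ) ≤ j)]
  have h_integrand : ∀ x ∈ Ioi (0 : ℝ),
      (x : ℂ) ^ (s - 1) * (GH μ (2 * n + 1) x : ℂ) * ((x ^ μ : ℝ) : ℂ) *
          (Real.exp (-x ^ 2 / 2) : ℂ) = ∑ j ∈ range (n + 1), (hoddCoeff μ n j : ℂ) *
            ((x : ℂ) ^ (s + μ + 2 * j) * (Real.exp (-(1 / 2 * x ^ 2)) : ℂ)) := by
    intro x (hx : 0 < x)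
    have hx0 : (x : ℂ) ≠ 0 := by exact_mod_cast hx.ne'
    rw [GH_two_mul_add_one, Hodd_eq_sum, Complex.ofReal_cpow hx.le, Complex.ofReal_sum, mul_sum,
      sum_mul, sum_mul]
    refine sum_congr rfl fun j _ => ?_
    rw [show s + μ + 2 * j = (s - 1) + (μ + ((2 * j + 1 : ℕ) : ℂ)) by push_cast; ring,
      Complex.cpow_add _ _ hx0, Complex.cpow_add _ _ hx0, Complex.cpow_natCast]
    push_cast
    ring_nf
  rw [M, setIntegral_congr_fun measurableSet_Ioi h_integrand, integral_finsetSum _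
    fun j _ => ((integrableOn_cpow_mul_exp_neg_mul_sq (h_re j) one_half_pos).const_mul _)]
  refine sum_congr rfl fun j _ => ?_
  rw [integral_const_mul, integral_cpow_mul_exp_neg_mul_sq (h_re j) one_half_pos,
    show (s + μ + 2 * j + 1) / 2 = ((μ : ℂ) + s + 1) / 2 + j by ring,
    show (1 / ((1 / 2 : ℝ) : ℂ)) = 2 by norm_num]
  ring

lemma hoddCoeff_mul_two_cpow_mul_Gamma_eq {μ : ℝ} {b : ℂ} (hb : ∀ k : ℕ, b ≠ -k)
    (hc : ∀ k : ℕ, (μ + 3 / 2 : ℂ) ≠ -k) {n j : ℕ} (hj : j ≤ n) :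
    (hoddCoeff μ n j : ℂ) * (2 ^ (b + j) / 2 * Complex.Gamma (b + j)) =
      (-1) ^ n * 2 ^ (2 * n) * 2 ^ b * ascC (μ + 3 / 2) n * Complex.Gamma b *
        (ascC (-(n : ℂ)) j * ascC b j / ascC (μ + 3 / 2) j * 2 ^ j / (j.factorial : ℂ)) := by
  set c : ℂ := μ + 3 / 2
  have h_asc : ((asc (μ + 1 / 2 + j + 1) (n - j) : ℝ) : ℂ) = ascC (c + j) (n - j) := by
    rw [ofReal_asc]
    congr 1
    push_cast
    ring
  have h_split : ascC c n = ascC c j * ascC (c + j) (n - j) := by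
    rw [← ascC_add, Nat.add_sub_cancel' hj]
  have h_neg : ascC (-(n : ℂ)) j = (-1) ^ j * n.factorial / (n - j).factorial := by
    rw [eq_div_iff (Nat.cast_ne_zero.2 (Nat.factorial_ne_zero _)),
      ascC_neg_natCast_mul_factorial hj]
  have h_two : (2 : ℂ) ^ (b + j) = 2 ^ b * 2 ^ j := by
    rw [Complex.cpow_add _ _ two_ne_zero, Complex.cpow_natCast]
  have hc_ne : ascC c j ≠ 0 := ascC_ne_zero hc j
  rw [hoddCoeff, Complex.ofReal_mul, h_asc, Complex.Gamma_add_nat_eq_ascC_mul_Gamma hb, h_split,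
    h_neg, h_two]
  push_cast
  field_simp
  ring

theorem stmt2 (μ : ℝ) (hμ : μ > -(1/2)) (n : ℕ) (s : ℂ) (hs : 0 < s.re) :
    M μ (2 * n + 1) s =
      (-1 : ℂ) ^ n * 2 ^ (2 * n) * (2 : ℂ) ^ (((μ : ℂ) + s + 1) / 2) *
        ascC ((μ : ℂ) + 3/2) n * Complex.Gamma (((μ : ℂ) + s + 1) / 2) *
        F2 n (((μ : ℂ) + s + 1) / 2) ((μ : ℂ) + 3/2) := by
  have hb : ∀ k : ℕ, ((μ : ℂ) + s + 1) / 2 ≠ -k := Complex.ne_neg_natCast_of_re_pos <| by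
    simp only [Complex.div_ofNat_re, Complex.add_re, Complex.ofReal_re, Complex.one_re]
    linarith
  have hc : ∀ k : ℕ, (μ + 3 / 2 : ℂ) ≠ -k := Complex.ne_neg_natCast_of_re_pos <| by
    simp only [Complex.add_re, Complex.ofReal_re, Complex.div_ofNat_re, Complex.re_ofNat]
    linarith
  rw [M_two_mul_add_one_eq_sum (by linarith) n, F2, mul_sum]
  exact sum_congr rfl fun j hj =>
    hoddCoeff_mul_two_cpow_mul_Gamma_eq hb hc (Nat.lt_succ_iff.1 (mem_range.1 hj))
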